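/- arXiv:1207.3026 — 3 statements merged into one kernel-verified Lean document; each statement's English description precedes it below -/
import Mathlib

section
/- Let p ≥ 0 be an integer and let P denote the space of real polynomials of degree at most p. For d = (d_0, …, d_p) ∈ ℝ^{p+1} define Q(d) = inf_{v ∈ P} ( ∫_{-1/2}^{0} (v(ξ) + f_d(ξ))² dξ + ∫_{0}^{1/2} (v(ξ) − f_d(ξ))² dξ ), where f_d(ξ) = (1/2) Σ_{k=0}^{p} (d_k/k!) ξ^k. Then Q is positive definite: Q(d) ≥ 0 for all d, and Q(d) > 0 whenever d ≠ 0. -/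
open MeasureTheory Polynomial

/-- `fd p d ξ = (1/2) Σ_{k=0}^p (d_k/k!) ξ^k`. -/
noncomputable def fd (p : ℕ) (d : Fin (p+1) → ℝ) (ξ : ℝ) : ℝ :=
  (1/2) * ∑ k : Fin (p+1), d k / (Nat.factorial k) * ξ ^ (k : ℕ)

/-- The error functional whose infimum over polynomials of degree ≤ p defines `Qform`. -/
noncomputable def Qerr (p : ℕ) (d : Fin (p+1) → ℝ) (v : Polynomial ℝ) : ℝ :=
  (∫ ξ in (-(1:ℝ)/2)..0, (v.eval ξ + fd p d ξ)^2) +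
  (∫ ξ in (0:ℝ)..(1/2), (v.eval ξ - fd p d ξ)^2)

/-- `Q(d) = inf_{v ∈ P} Qerr p d v`. -/
noncomputable def Qform (p : ℕ) (d : Fin (p+1) → ℝ) : ℝ :=
  sInf {q : ℝ | ∃ v : Polynomial ℝ, v.natDegree ≤ p ∧ q = Qerr p d v}

lemma sq_integral_pos {q : Polynomial ℝ} (hq : q ≠ 0) {a b : ℝ} (hab : a < b) :
    0 < ∫ ξ in a..b, (q.eval ξ)^2 := by
  rw [intervalIntegral.integral_pos_iff_support_of_nonneg_ae'
    (Filter.Eventually.of_forall fun x => sq_nonneg _)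
    ((q.continuous.pow 2).intervalIntegrable a b)]
  refine ⟨hab, ?_⟩
  have hsub : Set.Ioc a b \ {x | q.IsRoot x} ⊆ Function.support (fun ξ => (q.eval ξ)^2) ∩ Set.Ioc a b := by
    rintro x ⟨hx1, hx2⟩
    exact ⟨by simpa [Function.mem_support, pow_eq_zero_iff] using hx2, hx1⟩
  calc (0:ENNReal) < volume (Set.Ioc a b) := by simp [hab]
    _ = volume (Set.Ioc a b \ {x | q.IsRoot x}) :=
        (measure_diff_null ((finite_setOf_isRoot hq).measure_zero _)).symm
    _ ≤ _ := measure_mono hsub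

noncomputable def pol (p : ℕ) (c : Fin (p+1) → ℝ) : Polynomial ℝ :=
  ∑ i : Fin (p+1), C (c i) * X ^ (i:ℕ)

lemma pol_coeff (p : ℕ) (c : Fin (p+1) → ℝ) (j : ℕ) :
    (pol p c).coeff j = if h : j < p+1 then c ⟨j, h⟩ else 0 := by
  rw [pol, Polynomial.finset_sum_coeff]
  simp only [coeff_C_mul, coeff_X_pow]
  split
  · next h =>
    rw [Finset.sum_eq_single (⟨j, h⟩ : Fin (p+1))]
    · simp
    · intro i _ hi
      simp only [mul_ite, mul_one, mul_zero, ite_eq_right_iff]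
      intro hij; exact absurd (Fin.ext hij.symm) hi
    · simp
  · next h =>
    apply Finset.sum_eq_zero
    intro i _
    simp only [mul_ite, mul_one, mul_zero, ite_eq_right_iff]
    intro hij; exact absurd (hij ▸ i.isLt) h

lemma pol_natDegree_le (p : ℕ) (c : Fin (p+1) → ℝ) : (pol p c).natDegree ≤ p := by
  rw [Polynomial.natDegree_le_iff_coeff_eq_zero]
  intro N hN
  rw [pol_coeff]
  exact dif_neg (by omega)

lemma pol_eval (p : ℕ) (c : Fin (p+1) → ℝ) (ξ : ℝ) :
    (pol p c).eval ξ = ∑ i : Fin (p+1), c i * ξ^(i:ℕ) := by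
  simp [pol, Polynomial.eval_finset_sum]

lemma pol_of_natDegree_le {p : ℕ} {v : Polynomial ℝ} (hv : v.natDegree ≤ p) :
    pol p (fun i => v.coeff i) = v := by
  ext j
  rw [pol_coeff]
  split
  · rfl
  · next h => exact (Polynomial.coeff_eq_zero_of_natDegree_lt (by omega)).symm

lemma pol_ne_zero {p : ℕ} {c : Fin (p+1) → ℝ} (hc : c ≠ 0) : pol p c ≠ 0 := by
  obtain ⟨k, hk⟩ := Function.ne_iff.mp hc
  intro h
  apply hk
  have := pol_coeff p c (k : ℕ)
  rw [h] at this
  simpa [k.isLt] using this.symm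

lemma fd_continuous (p : ℕ) (d : Fin (p+1) → ℝ) : Continuous (fd p d) := by
  unfold fd; fun_prop

noncomputable def amat (p : ℕ) (i j : Fin (p+1)) : ℝ :=
  ∫ ξ in (-(1:ℝ)/2)..(1/2), ξ^((i:ℕ)+(j:ℕ))

noncomputable def bvec (p : ℕ) (d : Fin (p+1) → ℝ) (i : Fin (p+1)) : ℝ :=
  2*((∫ ξ in (-(1:ℝ)/2)..0, ξ^(i:ℕ) * fd p d ξ) - ∫ ξ in (0:ℝ)..(1/2), ξ^(i:ℕ) * fd p d ξ)

noncomputable def Kc (p : ℕ) (d : Fin (p+1) → ℝ) : ℝ :=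
  ∫ ξ in (-(1:ℝ)/2)..(1/2), (fd p d ξ)^2

noncomputable def Bq (p : ℕ) (c : Fin (p+1) → ℝ) : ℝ :=
  ∑ i : Fin (p+1), ∑ j : Fin (p+1), c i * c j * amat p i j

noncomputable def Lf (p : ℕ) (d : Fin (p+1) → ℝ) (c : Fin (p+1) → ℝ) : ℝ :=
  ∑ i : Fin (p+1), c i * bvec p d i

lemma Bq_eq (p : ℕ) (c : Fin (p+1) → ℝ) :
    (∫ ξ in (-(1:ℝ)/2)..(1/2), ((pol p c).eval ξ)^2) = Bq p c := by
  have h : ∀ ξ : ℝ, ((pol p c).eval ξ)^2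
      = ∑ i : Fin (p+1), ∑ j : Fin (p+1), (c i * c j) * ξ^((i:ℕ)+(j:ℕ)) := by
    intro ξ
    rw [pol_eval, sq, Finset.sum_mul_sum]
    refine Finset.sum_congr rfl fun i _ => Finset.sum_congr rfl fun j _ => ?_
    rw [pow_add]; ring
  simp_rw [h]
  rw [intervalIntegral.integral_finset_sum (fun i _ => by
    apply Continuous.intervalIntegrable; fun_prop)]
  refine Finset.sum_congr rfl fun i _ => ?_
  rw [intervalIntegral.integral_finset_sum (fun j _ => by
    apply Continuous.intervalIntegrable; fun_prop)]
  refine Finset.sum_congr rfl fun j _ => ?_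
  rw [intervalIntegral.integral_const_mul]; rfl

lemma cross_eq (p : ℕ) (d : Fin (p+1) → ℝ) (c : Fin (p+1) → ℝ) (a b : ℝ) :
    (∫ ξ in a..b, (pol p c).eval ξ * fd p d ξ)
      = ∑ i : Fin (p+1), c i * ∫ ξ in a..b, ξ^(i:ℕ) * fd p d ξ := by
  have h : ∀ ξ : ℝ, (pol p c).eval ξ * fd p d ξ
      = ∑ i : Fin (p+1), c i * (ξ^(i:ℕ) * fd p d ξ) := by
    intro ξ
    rw [pol_eval, Finset.sum_mul]
    exact Finset.sum_congr rfl fun i _ => by ring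
  simp_rw [h]
  rw [intervalIntegral.integral_finset_sum (fun i _ => by
    apply Continuous.intervalIntegrable
    exact continuous_const.mul ((continuous_pow _).mul (fd_continuous p d)))]
  exact Finset.sum_congr rfl fun i _ => intervalIntegral.integral_const_mul _ _

lemma Qerr_decomp (p : ℕ) (d : Fin (p+1) → ℝ) (c : Fin (p+1) → ℝ) :
    Qerr p d (pol p c) = Bq p c + Lf p d c + Kc p d := by
  have hv : Continuous fun ξ => (pol p c).eval ξ := (pol p c).continuous
  have hf := fd_continuous p d
  have key : ∀ (a b s : ℝ), (∫ ξ in a..b, ((pol p c).eval ξ + s * fd p d ξ)^2)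
      = (∫ ξ in a..b, ((pol p c).eval ξ)^2)
        + ((2*s) * ∫ ξ in a..b, (pol p c).eval ξ * fd p d ξ)
        + s^2 * (∫ ξ in a..b, (fd p d ξ)^2) := by
    intro a b s
    rw [← intervalIntegral.integral_const_mul, ← intervalIntegral.integral_const_mul,
      ← intervalIntegral.integral_add (by apply Continuous.intervalIntegrable; fun_prop)
        (by apply Continuous.intervalIntegrable; fun_prop),
      ← intervalIntegral.integral_add (by apply Continuous.intervalIntegrable; fun_prop)
        (by apply Continuous.intervalIntegrable; fun_prop)]
    congr 1; funext ξ; ring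
  have e1 : Qerr p d (pol p c)
      = (∫ ξ in (-(1:ℝ)/2)..0, ((pol p c).eval ξ + 1 * fd p d ξ)^2)
      + (∫ ξ in (0:ℝ)..(1/2), ((pol p c).eval ξ + (-1) * fd p d ξ)^2) := by
    unfold Qerr; congr 1 <;> (congr 1; funext ξ; ring)
  rw [e1, key, key]
  have hsplit1 : (∫ ξ in (-(1:ℝ)/2)..0, ((pol p c).eval ξ)^2)
      + (∫ ξ in (0:ℝ)..(1/2), ((pol p c).eval ξ)^2)
      = ∫ ξ in (-(1:ℝ)/2)..(1/2), ((pol p c).eval ξ)^2 :=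
    intervalIntegral.integral_add_adjacent_intervals
      (by apply Continuous.intervalIntegrable; fun_prop)
      (by apply Continuous.intervalIntegrable; fun_prop)
  have hsplit2 : (∫ ξ in (-(1:ℝ)/2)..0, (fd p d ξ)^2)
      + (∫ ξ in (0:ℝ)..(1/2), (fd p d ξ)^2)
      = ∫ ξ in (-(1:ℝ)/2)..(1/2), (fd p d ξ)^2 :=
    intervalIntegral.integral_add_adjacent_intervals
      (by apply Continuous.intervalIntegrable; fun_prop)
      (by apply Continuous.intervalIntegrable; fun_prop)
  have hL : Lf p d c = 2 * ((∫ ξ in (-(1:ℝ)/2)..0, (pol p c).eval ξ * fd p d ξ)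
      - ∫ ξ in (0:ℝ)..(1/2), (pol p c).eval ξ * fd p d ξ) := by
    rw [cross_eq, cross_eq, Lf]
    rw [← Finset.sum_sub_distrib, Finset.mul_sum]
    refine Finset.sum_congr rfl fun i _ => ?_
    rw [bvec]; ring
  rw [← Bq_eq p c] at *
  rw [Kc, ← hsplit2, hL]
  ring_nf
  rw [← hsplit1]
  ring

lemma Bq_smul (p : ℕ) (t : ℝ) (c : Fin (p+1) → ℝ) : Bq p (t • c) = t^2 * Bq p c := by
  simp only [Bq, Pi.smul_apply, smul_eq_mul, Finset.mul_sum]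
  exact Finset.sum_congr rfl fun i _ => Finset.sum_congr rfl fun j _ => by ring

lemma Bq_continuous (p : ℕ) : Continuous (Bq p) := by
  unfold Bq
  exact continuous_finset_sum _ fun i _ => continuous_finset_sum _ fun j _ =>
    ((continuous_apply i).mul (continuous_apply j)).mul continuous_const

lemma Lf_continuous (p : ℕ) (d : Fin (p+1) → ℝ) : Continuous (Lf p d) := by
  unfold Lf
  exact continuous_finset_sum _ fun i _ => (continuous_apply i).mul continuous_const

lemma Lf_abs_le (p : ℕ) (d : Fin (p+1) → ℝ) (c : Fin (p+1) → ℝ) :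
    |Lf p d c| ≤ (∑ i : Fin (p+1), |bvec p d i|) * ‖c‖ := by
  calc |Lf p d c| ≤ ∑ i : Fin (p+1), |c i * bvec p d i| := Finset.abs_sum_le_sum_abs _ _
    _ ≤ ∑ i : Fin (p+1), ‖c‖ * |bvec p d i| := by
        refine Finset.sum_le_sum fun i _ => ?_
        rw [abs_mul]
        exact mul_le_mul_of_nonneg_right
          (by simpa [Real.norm_eq_abs] using norm_le_pi_norm c i) (abs_nonneg _)
    _ = _ := by rw [← Finset.mul_sum, mul_comm]

lemma Bq_pos (p : ℕ) {c : Fin (p+1) → ℝ} (hc : c ≠ 0) : 0 < Bq p c := by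
  rw [← Bq_eq]
  exact sq_integral_pos (pol_ne_zero hc) (by norm_num)

noncomputable def cdv (p : ℕ) (d : Fin (p+1) → ℝ) : Fin (p+1) → ℝ :=
  fun k => d k / (2 * (Nat.factorial (k:ℕ)))

lemma fd_eq_eval (p : ℕ) (d : Fin (p+1) → ℝ) (ξ : ℝ) :
    fd p d ξ = (pol p (cdv p d)).eval ξ := by
  rw [pol_eval, fd, Finset.mul_sum]
  refine Finset.sum_congr rfl fun k _ => ?_
  have h : ((Nat.factorial (k:ℕ) : ℝ)) ≠ 0 := Nat.cast_ne_zero.mpr (Nat.factorial_ne_zero _)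
  unfold cdv
  field_simp

lemma cdv_ne_zero (p : ℕ) {d : Fin (p+1) → ℝ} (hd : d ≠ 0) : cdv p d ≠ 0 := by
  obtain ⟨k, hk⟩ := Function.ne_iff.mp hd
  refine Function.ne_iff.mpr ⟨k, ?_⟩
  simp only [cdv, Pi.zero_apply]
  exact div_ne_zero hk (by positivity)

lemma Qerr_nonneg (p : ℕ) (d : Fin (p+1) → ℝ) (v : Polynomial ℝ) : 0 ≤ Qerr p d v :=
  add_nonneg
    (intervalIntegral.integral_nonneg (by norm_num) fun u _ => sq_nonneg _)
    (intervalIntegral.integral_nonneg (by norm_num) fun u _ => sq_nonneg _)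

lemma Qerr_pos (p : ℕ) {d : Fin (p+1) → ℝ} (hd : d ≠ 0) (c : Fin (p+1) → ℝ) :
    0 < Qerr p d (pol p c) := by
  set F := pol p (cdv p d) with hF
  have hFne : F ≠ 0 := pol_ne_zero (cdv_ne_zero p hd)
  unfold Qerr
  by_cases h : pol p c + F = 0
  · have hrw : ∀ ξ : ℝ, (pol p c).eval ξ - fd p d ξ = (pol p c - F).eval ξ := by
      intro ξ; rw [fd_eq_eval]; simp [hF]
    have hne : pol p c - F ≠ 0 := by
      intro hz
      apply hFne
      have h2 : pol p c = F := sub_eq_zero.mp hz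
      have h3 : (2:ℝ) • F = 0 := by
        rw [two_smul, ← h2]
        rw [← h2] at h
        exact h
      rcases smul_eq_zero.mp h3 with h4 | h4
      · norm_num at h4
      · exact h4
    have hpos : 0 < ∫ ξ in (0:ℝ)..(1/2), ((pol p c).eval ξ - fd p d ξ)^2 := by
      simp_rw [hrw]
      exact sq_integral_pos hne (by norm_num)
    exact add_pos_of_nonneg_of_pos
      (intervalIntegral.integral_nonneg (by norm_num) fun u _ => sq_nonneg _) hpos
  · have hrw : ∀ ξ : ℝ, (pol p c).eval ξ + fd p d ξ = (pol p c + F).eval ξ := by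
      intro ξ; rw [fd_eq_eval]; simp [hF]
    have hpos : 0 < ∫ ξ in (-(1:ℝ)/2)..0, ((pol p c).eval ξ + fd p d ξ)^2 := by
      simp_rw [hrw]
      exact sq_integral_pos h (by norm_num)
    exact add_pos_of_pos_of_nonneg hpos
      (intervalIntegral.integral_nonneg (by norm_num) fun u _ => sq_nonneg _)

lemma Qerr_lower (p : ℕ) {d : Fin (p+1) → ℝ} (hd : d ≠ 0) :
    ∃ ε > 0, ∀ c : Fin (p+1) → ℝ, ε ≤ Qerr p d (pol p c) := by
  obtain ⟨u0, hu0, hmin⟩ := (isCompact_sphere (0 : Fin (p+1) → ℝ) 1).exists_isMinOn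
    (NormedSpace.sphere_nonempty.mpr zero_le_one) (Bq_continuous p).continuousOn
  set m := Bq p u0 with hm_def
  have hm : 0 < m := by
    apply Bq_pos
    intro h
    rw [h] at hu0
    simp at hu0
  have hBq_lb : ∀ c : Fin (p+1) → ℝ, m * ‖c‖^2 ≤ Bq p c := by
    intro c
    rcases eq_or_ne c 0 with rfl | hc
    · simp [Bq]
    · have hn : (0:ℝ) < ‖c‖ := norm_pos_iff.mpr hc
      have hu : (‖c‖⁻¹ • c) ∈ Metric.sphere (0 : Fin (p+1) → ℝ) 1 := by
        simp [norm_smul, abs_of_pos (inv_pos.mpr hn), inv_mul_cancel₀ hn.ne']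
      have h1 : Bq p u0 ≤ Bq p (‖c‖⁻¹ • c) := hmin hu
      have hcc : c = ‖c‖ • (‖c‖⁻¹ • c) := by
        rw [smul_smul, mul_inv_cancel₀ hn.ne', one_smul]
      calc m * ‖c‖^2 = ‖c‖^2 * m := by ring
        _ ≤ ‖c‖^2 * Bq p (‖c‖⁻¹ • c) := by nlinarith [sq_nonneg ‖c‖]
        _ = Bq p (‖c‖ • (‖c‖⁻¹ • c)) := (Bq_smul p _ _).symm
        _ = Bq p c := by rw [← hcc]
  set M := ∑ i : Fin (p+1), |bvec p d i| with hM_def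
  have hM0 : 0 ≤ M := Finset.sum_nonneg fun i _ => abs_nonneg _
  set R := (M+1)/m with hR_def
  have hR0 : 0 < R := div_pos (by linarith) hm
  have hG : Continuous fun c : Fin (p+1) → ℝ => Qerr p d (pol p c) := by
    have : (fun c : Fin (p+1) → ℝ => Qerr p d (pol p c))
        = fun c => Bq p c + Lf p d c + Kc p d := funext fun c => Qerr_decomp p d c
    rw [this]
    exact ((Bq_continuous p).add (Lf_continuous p d)).add continuous_const
  obtain ⟨c0, hc0mem, hminB⟩ := (isCompact_closedBall (0 : Fin (p+1) → ℝ) R).exists_isMinOn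
    ⟨0, Metric.mem_closedBall_self hR0.le⟩ hG.continuousOn
  refine ⟨min (Qerr p d (pol p c0)) R, lt_min (Qerr_pos p hd c0) hR0, fun c => ?_⟩
  by_cases hcR : ‖c‖ ≤ R
  · exact le_trans (min_le_left _ _)
      (hminB (by simpa [Metric.mem_closedBall, dist_zero_right] using hcR))
  · push_neg at hcR
    refine le_trans (min_le_right _ _) ?_
    rw [Qerr_decomp]
    have hK : 0 ≤ Kc p d :=
      intervalIntegral.integral_nonneg (by norm_num) fun u _ => sq_nonneg _
    have habs := Lf_abs_le p d c
    rw [← hM_def] at habs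
    have hLf : -(M * ‖c‖) ≤ Lf p d c := neg_le_of_abs_le habs
    have hB := hBq_lb c
    have hmR : m * R = M + 1 := by rw [hR_def]; field_simp
    nlinarith [hK, hLf, hB, hcR, hm, hM0, norm_nonneg c, hmR,
      mul_nonneg (mul_nonneg hm.le (norm_nonneg c)) (sub_pos.mpr hcR).le]

/-- `Q` is positive definite: `Q(d) ≥ 0` for all `d`, and `Q(d) > 0`
whenever `d ≠ 0`. -/
theorem Qform_pos_definite (p : ℕ) :
    (∀ d : Fin (p+1) → ℝ, 0 ≤ Qform p d) ∧
    (∀ d : Fin (p+1) → ℝ, d ≠ 0 → 0 < Qform p d) := by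
  constructor
  · intro d
    apply Real.sInf_nonneg
    rintro x ⟨v, hv, rfl⟩
    exact Qerr_nonneg p d v
  · intro d hd
    obtain ⟨ε, hε, hlb⟩ := Qerr_lower p hd
    have hne : {q : ℝ | ∃ v : Polynomial ℝ, v.natDegree ≤ p ∧ q = Qerr p d v}.Nonempty :=
      ⟨Qerr p d 0, 0, by simp, rfl⟩
    refine lt_of_lt_of_le hε (le_csInf hne ?_)
    rintro q ⟨v, hv, rfl⟩
    rw [← pol_of_natDegree_le hv]
    exact hlb _
end

section
/- Let p ≥ 0 be an integer. The function Q : ℝ^{p+1} → ℝ is a positive definite quadratic form: there exists a symmetric positive definite real matrix A = (A_{jk})_{0 ≤ j,k ≤ p} such that Q(d) = Σ_{j,k=0}^{p} A_{jk} d_j d_k for all d ∈ ℝ^{p+1}. -/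
open MeasureTheory Polynomial

/-!
Writing `v = Σ c_j ξ^j`, the error `Qerr p d v` is a quadratic form in `(c, d)` whose matrix `M`
collects the `L²` inner products on the two half-intervals. `M` is positive definite: if the form
vanishes then `v + f_d` and `v - f_d` vanish on intervals, so `v = f_d = 0`. Minimising over `c`
leaves the quadratic form of the Schur complement of the `c`-block of `M`, and a Schur complement
of a positive definite matrix is positive definite.
-/

open scoped Matrix

namespace Matrix

variable {m n 𝕜 : Type*}

lemma IsHermitian.toBlocks₂₁_eq [Star 𝕜] {M : Matrix (m ⊕ n) (m ⊕ n) 𝕜} (hM : M.IsHermitian) :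
    M.toBlocks₂₁ = M.toBlocks₁₂ᴴ := by
  ext i j; exact (hM.apply _ _).symm

variable [Field 𝕜] [PartialOrder 𝕜] [StarRing 𝕜]

noncomputable def schurCompl₁₁ [Fintype m] [DecidableEq m] (M : Matrix (m ⊕ n) (m ⊕ n) 𝕜) :
    Matrix n n 𝕜 :=
  M.toBlocks₂₂ - M.toBlocks₂₁ * M.toBlocks₁₁⁻¹ * M.toBlocks₁₂

namespace PosDef

variable {M : Matrix (m ⊕ n) (m ⊕ n) 𝕜} (hM : M.PosDef)
include hM

lemma toBlocks₁₁ : M.toBlocks₁₁.PosDef := hM.submatrix Sum.inl_injective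

variable [Fintype m] [Fintype n] [DecidableEq m]

lemma dotProduct_mulVec_sumElim (x : m → 𝕜) (y : n → 𝕜) :
    star (x ⊕ᵥ y) ⬝ᵥ M *ᵥ (x ⊕ᵥ y) =
      star (x + (M.toBlocks₁₁⁻¹ * M.toBlocks₁₂) *ᵥ y) ⬝ᵥ
          M.toBlocks₁₁ *ᵥ (x + (M.toBlocks₁₁⁻¹ * M.toBlocks₁₂) *ᵥ y) +
        star y ⬝ᵥ M.schurCompl₁₁ *ᵥ y := by
  have := hM.toBlocks₁₁.isUnit.invertible
  conv_lhs => rw [← fromBlocks_toBlocks M, hM.isHermitian.toBlocks₂₁_eq]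
  rw [schurCompl₁₁, hM.isHermitian.toBlocks₂₁_eq, dotProduct_mulVec, dotProduct_mulVec,
    dotProduct_mulVec, schur_complement_eq₁₁ _ _ _ _ hM.toBlocks₁₁.isHermitian]

lemma dotProduct_mulVec_schurCompl₁₁ (y : n → 𝕜) :
    star y ⬝ᵥ M.schurCompl₁₁ *ᵥ y =
      star (-((M.toBlocks₁₁⁻¹ * M.toBlocks₁₂) *ᵥ y) ⊕ᵥ y) ⬝ᵥ
        M *ᵥ (-((M.toBlocks₁₁⁻¹ * M.toBlocks₁₂) *ᵥ y) ⊕ᵥ y) := by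
  rw [hM.dotProduct_mulVec_sumElim, neg_add_cancel, star_zero, zero_dotProduct, zero_add]

lemma isLeast_dotProduct_mulVec_sumElim [StarOrderedRing 𝕜] (y : n → 𝕜) :
    IsLeast (Set.range fun x : m → 𝕜 => star (x ⊕ᵥ y) ⬝ᵥ M *ᵥ (x ⊕ᵥ y))
      (star y ⬝ᵥ M.schurCompl₁₁ *ᵥ y) := by
  refine ⟨⟨_, (hM.dotProduct_mulVec_schurCompl₁₁ y).symm⟩, ?_⟩
  rintro _ ⟨x, rfl⟩
  dsimp only
  rw [hM.dotProduct_mulVec_sumElim]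
  exact le_add_of_nonneg_left (hM.toBlocks₁₁.posSemidef.dotProduct_mulVec_nonneg _)

lemma schurCompl₁₁ : M.schurCompl₁₁.PosDef := by
  refine posDef_iff_dotProduct_mulVec.mpr ⟨?_, fun y hy => ?_⟩
  · rw [Matrix.schurCompl₁₁, hM.isHermitian.toBlocks₂₁_eq,
      ← IsHermitian.fromBlocks₁₁ _ _ hM.toBlocks₁₁.isHermitian, ← hM.isHermitian.toBlocks₂₁_eq,
      fromBlocks_toBlocks]
    exact hM.isHermitian
  · rw [hM.dotProduct_mulVec_schurCompl₁₁]
    refine (posDef_iff_dotProduct_mulVec.mp hM).2 fun h => hy (funext fun i => ?_)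
    exact congr_fun h (Sum.inr i)

end PosDef

lemma dotProduct_mulVec_eq_sum_sum {ι R : Type*} [Fintype ι] [CommSemiring R]
    (A : Matrix ι ι R) (x : ι → R) :
    x ⬝ᵥ A *ᵥ x = ∑ j, ∑ k, A j k * x j * x k := by
  simp only [dotProduct, mulVec, Finset.mul_sum]
  exact Finset.sum_congr rfl fun j _ => Finset.sum_congr rfl fun k _ => by ring

end Matrix

section L2Gram

variable {ι : Type*} (a b : ℝ) (φ : ι → ℝ[X])

noncomputable def l2Gram : Matrix ι ι ℝ :=
  Matrix.of fun i j => ∫ t in a..b, (φ i).eval t * (φ j).eval t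

lemma l2Gram_isHermitian : (l2Gram a b φ).IsHermitian := by
  ext i j
  simp only [Matrix.conjTranspose_apply, star_trivial, l2Gram, Matrix.of_apply, mul_comm]

variable [Fintype ι]

lemma dotProduct_l2Gram_mulVec (x : ι → ℝ) :
    x ⬝ᵥ l2Gram a b φ *ᵥ x = ∫ t in a..b, (∑ i, x i • φ i).eval t ^ 2 := by
  have hsq (t : ℝ) : (∑ i, x i • φ i).eval t ^ 2 =
      ∑ i, ∑ j, x i * x j * ((φ i).eval t * (φ j).eval t) := by
    simp only [eval_finsetSum, eval_smul, smul_eq_mul, sq, Finset.sum_mul_sum]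
    exact Finset.sum_congr rfl fun i _ => Finset.sum_congr rfl fun j _ => by ring
  have hint (i j : ι) : IntervalIntegrable
      (fun t => x i * x j * ((φ i).eval t * (φ j).eval t)) volume a b := by
    apply Continuous.intervalIntegrable; fun_prop
  simp_rw [hsq]
  rw [intervalIntegral.integral_finsetSum fun i _ => by
    apply Continuous.intervalIntegrable; fun_prop]
  simp only [intervalIntegral.integral_finsetSum fun j _ => hint _ j,
    intervalIntegral.integral_const_mul, dotProduct, Matrix.mulVec, l2Gram, Matrix.of_apply,
    Finset.mul_sum]
  exact Finset.sum_congr rfl fun i _ => Finset.sum_congr rfl fun j _ => by ring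

lemma integral_sq_eval_pos {a b : ℝ} (hab : a < b) {q : ℝ[X]} (hq : q ≠ 0) :
    0 < ∫ t in a..b, q.eval t ^ 2 := by
  rw [intervalIntegral.integral_pos_iff_support_of_nonneg_ae
    (ae_of_all _ fun t => sq_nonneg _) (by apply Continuous.intervalIntegrable; fun_prop)]
  refine ⟨hab, ?_⟩
  have hsupp : Set.Ioc a b \ {t | q.IsRoot t} ⊆
      Function.support (fun t => q.eval t ^ 2) ∩ Set.Ioc a b :=
    fun t ht => ⟨pow_ne_zero 2 ht.2, ht.1⟩
  calc 0 < volume (Set.Ioc a b) := by simp [hab]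
    _ = volume (Set.Ioc a b \ {t | q.IsRoot t}) :=
      (measure_sdiff_null ((finite_setOfPred_isRoot hq).measure_zero _)).symm
    _ ≤ _ := measure_mono hsupp

end L2Gram

namespace Polynomial

variable {R : Type*} [CommRing R]

noncomputable def ofFinCoeffs {n : ℕ} (c : Fin n → R) : R[X] := (degreeLTEquiv R n).symm c

lemma ofFinCoeffs_eq_sum {n : ℕ} (c : Fin n → R) :
    ofFinCoeffs c = ∑ i : Fin n, monomial (i : ℕ) (c i) := rfl

@[simp]
lemma ofFinCoeffs_eq_zero_iff {n : ℕ} {c : Fin n → R} : ofFinCoeffs c = 0 ↔ c = 0 := by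
  simp [ofFinCoeffs]

lemma range_ofFinCoeffs (n : ℕ) :
    Set.range (ofFinCoeffs : (Fin (n + 1) → R) → R[X]) = {v | v.natDegree ≤ n} := by
  have hmem (v : R[X]) : v ∈ degreeLT R (n + 1) ↔ v.natDegree ≤ n := by
    rw [degreeLT_succ_eq_degreeLE, mem_degreeLE, natDegree_le_iff_degree_le]
  ext v
  refine ⟨?_, fun hv => ?_⟩
  · rintro ⟨c, rfl⟩
    exact (hmem _).mp ((degreeLTEquiv R _).symm c).2
  · exact ⟨degreeLTEquiv R _ ⟨v, (hmem v).mpr hv⟩,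
      congrArg Subtype.val ((degreeLTEquiv R _).symm_apply_apply _)⟩

end Polynomial

noncomputable def fdPoly (p : ℕ) (d : Fin (p+1) → ℝ) : ℝ[X] :=
  ofFinCoeffs fun k => d k / (2 * k.val.factorial)

lemma eval_fdPoly (p : ℕ) (d : Fin (p+1) → ℝ) (ξ : ℝ) :
    (fdPoly p d).eval ξ = fd p d ξ := by
  simp only [fdPoly, ofFinCoeffs_eq_sum, eval_finsetSum, eval_monomial, fd, Finset.mul_sum]
  refine Finset.sum_congr rfl fun k _ => ?_
  field_simp

lemma fdPoly_eq_zero_iff (p : ℕ) (d : Fin (p+1) → ℝ) : fdPoly p d = 0 ↔ d = 0 := by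
  simp [fdPoly, funext_iff, Nat.factorial_ne_zero]

/-- `s = ±1` is the sign of `f_d` in `Qerr` on the corresponding half-interval. -/
noncomputable def errBasis (p : ℕ) (s : ℝ) : Fin (p+1) ⊕ Fin (p+1) → ℝ[X] :=
  Sum.elim (fun j => monomial j 1) (fun k => monomial k (s / (2 * k.val.factorial)))

lemma sum_smul_errBasis (p : ℕ) (s : ℝ) (c d : Fin (p+1) → ℝ) :
    ∑ i, (c ⊕ᵥ d) i • errBasis p s i = ofFinCoeffs c + s • fdPoly p d := by
  simp only [Fintype.sum_sum_type, Sum.elim_inl, Sum.elim_inr, errBasis, fdPoly,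
    ofFinCoeffs_eq_sum, smul_monomial, Finset.smul_sum, smul_eq_mul, mul_one]
  congr 1
  exact Finset.sum_congr rfl fun k _ => by ring_nf

noncomputable def errGram (p : ℕ) : Matrix (Fin (p+1) ⊕ Fin (p+1)) (Fin (p+1) ⊕ Fin (p+1)) ℝ :=
  l2Gram (-(1:ℝ)/2) 0 (errBasis p 1) + l2Gram 0 (1/2) (errBasis p (-1))

lemma dotProduct_errGram_mulVec (p : ℕ) (c d : Fin (p+1) → ℝ) :
    (c ⊕ᵥ d) ⬝ᵥ errGram p *ᵥ (c ⊕ᵥ d) =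
      (∫ t in (-(1:ℝ)/2)..0, (ofFinCoeffs c + fdPoly p d).eval t ^ 2) +
      ∫ t in (0:ℝ)..(1/2), (ofFinCoeffs c - fdPoly p d).eval t ^ 2 := by
  rw [errGram, Matrix.add_mulVec, dotProduct_add, dotProduct_l2Gram_mulVec,
    dotProduct_l2Gram_mulVec, sum_smul_errBasis, sum_smul_errBasis, one_smul, neg_one_smul,
    ← sub_eq_add_neg]

lemma Qerr_ofFinCoeffs (p : ℕ) (c d : Fin (p+1) → ℝ) :
    Qerr p d (ofFinCoeffs c) = (c ⊕ᵥ d) ⬝ᵥ errGram p *ᵥ (c ⊕ᵥ d) := by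
  simp only [dotProduct_errGram_mulVec, Qerr, eval_add, eval_sub, eval_fdPoly]

lemma errGram_posDef (p : ℕ) : (errGram p).PosDef := by
  refine Matrix.posDef_iff_dotProduct_mulVec.mpr
    ⟨(l2Gram_isHermitian _ _ _).add (l2Gram_isHermitian _ _ _), fun x hx => ?_⟩
  rw [← Sum.elim_comp_inl_inr x, star_trivial, dotProduct_errGram_mulVec]
  set c := x ∘ Sum.inl
  set d := x ∘ Sum.inr
  have hnonneg {a b : ℝ} (hab : a ≤ b) (q : ℝ[X]) : 0 ≤ ∫ t in a..b, q.eval t ^ 2 :=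
    intervalIntegral.integral_nonneg hab fun t _ => sq_nonneg _
  have hne : ofFinCoeffs c + fdPoly p d ≠ 0 ∨ ofFinCoeffs c - fdPoly p d ≠ 0 := by
    by_contra! h
    have hc : (2 : ℝ[X]) * ofFinCoeffs c = 0 := by linear_combination h.1 + h.2
    have hd : (2 : ℝ[X]) * fdPoly p d = 0 := by linear_combination h.1 - h.2
    rw [mul_eq_zero, or_iff_right two_ne_zero, ofFinCoeffs_eq_zero_iff] at hc
    rw [mul_eq_zero, or_iff_right two_ne_zero, fdPoly_eq_zero_iff] at hd
    exact hx (by rw [← Sum.elim_comp_inl_inr x]; simp [c, d, hc, hd])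
  rcases hne with h | h
  · exact add_pos_of_pos_of_nonneg (integral_sq_eval_pos (by norm_num) h) (hnonneg (by norm_num) _)
  · exact add_pos_of_nonneg_of_pos (hnonneg (by norm_num) _) (integral_sq_eval_pos (by norm_num) h)

lemma Qform_eq_sInf_range (p : ℕ) (d : Fin (p+1) → ℝ) :
    Qform p d = sInf (Set.range fun c : Fin (p+1) → ℝ => Qerr p d (ofFinCoeffs c)) := by
  rw [Qform, Set.range_comp' (Qerr p d), range_ofFinCoeffs]
  congr 1
  ext q
  simp [eq_comm]

/-- `Q` is a positive definite quadratic form: there is a symmetric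
positive definite matrix `A` with `Q(d) = Σ_{j,k} A_{jk} d_j d_k`. -/
theorem Qform_is_posdef_quadratic_form (p : ℕ) :
    ∃ A : Matrix (Fin (p+1)) (Fin (p+1)) ℝ,
      A.IsSymm ∧ A.PosDef ∧
      ∀ d : Fin (p+1) → ℝ,
        Qform p d = ∑ j : Fin (p+1), ∑ k : Fin (p+1), A j k * d j * d k := by
  have hM := errGram_posDef p
  refine ⟨(errGram p).schurCompl₁₁, Matrix.isHermitian_iff_isSymm.mp hM.schurCompl₁₁.isHermitian,
    hM.schurCompl₁₁, fun d => ?_⟩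
  have hmin := hM.isLeast_dotProduct_mulVec_sumElim d
  simp only [star_trivial, ← Qerr_ofFinCoeffs] at hmin
  rw [Qform_eq_sInf_range, hmin.csInf_eq, Matrix.dotProduct_mulVec_eq_sum_sum]
end

section
/- Let p ≥ 0 be an integer, h > 0, and x_i ∈ ℝ. Suppose u^R : ℝ → ℝ coincides with a polynomial of degree at most p on (x_i − h/2, x_i) and with a (possibly different) polynomial of degree at most p on (x_i, x_i + h/2). Let J^k = (d^k/dx^k)u^R(x_i⁺) − (d^k/dx^k)u^R(x_i⁻) for 0 ≤ k ≤ p, and D^k = J^k / h^{p+1−k}. Then min over polynomials v of degree at most p of ∫_{x_i − h/2}^{x_i + h/2} (v(x) − u^R(x))² dx equals h^{2p+3} · Q(D^0, D^1, …, D^p). -/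
/-! Substitute `x = xi + h ξ`. The relation `v(xi + h ξ) = (ql + qr)(xi + h ξ) / 2 + h^(p+1) w(ξ)`
is a bijection `v ↔ w` of polynomials of degree `≤ p`, and Taylor expansion of `qr - ql` at `xi` gives
`(qr - ql)(xi + h ξ) = 2 h^(p+1) f_D(ξ)`. Hence `v - ql = h^(p+1) (w + f_D)` on the left half-cell and
`v - qr = h^(p+1) (w - f_D)` on the right one, and the squared factor `h^(2p+2)` times the
Jacobian `h` gives the scale `h^(2p+3)`. -/

open MeasureTheory Polynomial

open Set intervalIntegral
open scoped Nat Pointwise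

theorem eval_add_eq_sum_iterate_derivative {K : Type*} [Field K] [CharZero K] {p : ℕ} {q : K[X]}
    (hq : q.natDegree ≤ p) (r t : K) :
    q.eval (r + t) = ∑ k : Fin (p+1), (derivative^[k] q).eval r / (k ! : K) * t ^ (k : ℕ) := by
  rw [add_comm, ← taylor_eval, eval_eq_sum_range' (n := p+1) (by rw [natDegree_taylor]; omega),
    ← Fin.sum_univ_eq_sum_range]
  refine Finset.sum_congr rfl fun k _ => ?_
  rw [taylor_coeff, ← congrFun (factorial_smul_hasseDeriv (R := K) (k := k)) q,
    LinearMap.smul_apply, eval_smul, nsmul_eq_mul,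
    mul_div_cancel_left₀ _ (Nat.cast_ne_zero.mpr (Nat.factorial_ne_zero k))]

/-- The paper's `D^k = J^k / h^{p+1-k}`, where `J^k` is the jump of the `k`-th derivative at `xi`. -/
noncomputable def scaledJump (p : ℕ) (h xi : ℝ) (ql qr : ℝ[X]) (k : Fin (p+1)) : ℝ :=
  ((derivative^[k] qr).eval xi - (derivative^[k] ql).eval xi) / h^(p+1-(k:ℕ))

theorem eval_sub_eq_fd_scaledJump {p : ℕ} {h : ℝ} (hh : h ≠ 0) {ql qr : ℝ[X]}
    (hql : ql.natDegree ≤ p) (hqr : qr.natDegree ≤ p) (xi ξ : ℝ) :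
    (qr - ql).eval (xi + h * ξ) = 2 * h^(p+1) * fd p (scaledJump p h xi ql qr) ξ := by
  rw [eval_add_eq_sum_iterate_derivative ((natDegree_sub_le _ _).trans (max_le hqr hql)), fd,
    ← mul_assoc, Finset.mul_sum]
  refine Finset.sum_congr rfl fun k _ => ?_
  have hpow : h^(p+1) = h^(p+1-(k:ℕ)) * h^(k:ℕ) := by rw [← pow_add]; congr 1; omega
  rw [scaledJump, iterate_derivative_sub, eval_sub, mul_pow, hpow]
  field_simp

theorem natDegree_comp_linear_le {R : Type*} [Semiring R] (q : R[X]) (a b : R) :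
    (q.comp (C a * X + C b)).natDegree ≤ q.natDegree :=
  natDegree_comp_le.trans <| (Nat.mul_le_mul_left _ natDegree_linear_le).trans (mul_one _).le

section Rescaling

variable {K : Type*} [Field K] {p : ℕ} {c s : K} (x₀ : K) {m : K[X]}

theorem exists_natDegree_le_rescaled_remainder (hs : s ≠ 0) (hm : m.natDegree ≤ p)
    {v : K[X]} (hv : v.natDegree ≤ p) :
    ∃ w : K[X], w.natDegree ≤ p ∧
      ∀ ξ, v.eval (x₀ + c * ξ) = m.eval (x₀ + c * ξ) + s * w.eval ξ := by
  refine ⟨C s⁻¹ * (v - m).comp (C c * X + C x₀), ?_, fun ξ => ?_⟩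
  · exact (natDegree_C_mul_le _ _).trans <| (natDegree_comp_linear_le _ _ _).trans <|
      (natDegree_sub_le _ _).trans (max_le hv hm)
  · simp only [eval_mul, eval_C, eval_comp, eval_sub, eval_add, eval_X]
    field_simp
    ring_nf

theorem exists_natDegree_le_of_rescaled_remainder (hc : c ≠ 0) (hm : m.natDegree ≤ p)
    {w : K[X]} (hw : w.natDegree ≤ p) :
    ∃ v : K[X], v.natDegree ≤ p ∧
      ∀ ξ, v.eval (x₀ + c * ξ) = m.eval (x₀ + c * ξ) + s * w.eval ξ := by
  refine ⟨m + C s * w.comp (C c⁻¹ * X + C (-x₀ / c)), ?_, fun ξ => ?_⟩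
  · exact (natDegree_add_le _ _).trans <| max_le hm <| (natDegree_C_mul_le _ _).trans <|
      (natDegree_comp_linear_le _ _ _).trans hw
  · simp only [eval_add, eval_mul, eval_C, eval_comp, eval_X]
    congr 3
    field_simp
    ring

end Rescaling

theorem integral_eq_add_of_eqOn_Ioo {E : Type*} [NormedAddCommGroup E] [NormedSpace ℝ E]
    {f g₁ g₂ : ℝ → E} {a b c : ℝ} (hab : a ≤ b) (hbc : b ≤ c)
    (h₁ : EqOn f g₁ (Ioo a b)) (h₂ : EqOn f g₂ (Ioo b c))
    (hg₁ : IntervalIntegrable g₁ volume a b) (hg₂ : IntervalIntegrable g₂ volume b c) :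
    ∫ x in a..c, f x = (∫ x in a..b, g₁ x) + ∫ x in b..c, g₂ x := by
  rw [← integral_add_adjacent_intervals (hg₁.congr_uIoo (by rwa [uIoo_of_le hab, eqOn_comm]))
    (hg₂.congr_uIoo (by rwa [uIoo_of_le hbc, eqOn_comm])), integral_congr_Ioo_of_le hab h₁,
    integral_congr_Ioo_of_le hbc h₂]

theorem integral_sq_comp_add_mul {f g : ℝ → ℝ} {c s : ℝ} (x₀ a b : ℝ)
    (hfg : ∀ ξ, f (x₀ + c * ξ) = s * g ξ) :
    ∫ x in (x₀ + c * a)..(x₀ + c * b), f x ^ 2 = c * s ^ 2 * ∫ ξ in a..b, g ξ ^ 2 := by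
  rw [← smul_integral_comp_add_mul (fun x => f x ^ 2)]
  simp only [hfg, mul_pow, intervalIntegral.integral_const_mul, smul_eq_mul, mul_assoc]

theorem integral_sq_sub_eq_pow_mul_Qerr {p : ℕ} {h xi : ℝ} (hh : 0 < h) {uR : ℝ → ℝ}
    {ql qr : ℝ[X]} (hql : ql.natDegree ≤ p) (hqr : qr.natDegree ≤ p)
    (hL : ∀ x ∈ Ioo (xi - h/2) xi, uR x = ql.eval x)
    (hR : ∀ x ∈ Ioo xi (xi + h/2), uR x = qr.eval x) {v w : ℝ[X]}
    (hvw : ∀ ξ, v.eval (xi + h * ξ) =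
      ((1/2 : ℝ) • (ql + qr)).eval (xi + h * ξ) + h^(p+1) * w.eval ξ) :
    ∫ x in (xi - h/2)..(xi + h/2), (v.eval x - uR x)^2 =
      h^(2*p+3) * Qerr p (scaledJump p h xi ql qr) w := by
  set D := scaledJump p h xi ql qr
  have hjump := eval_sub_eq_fd_scaledJump hh.ne' hql hqr xi
  have hsplit := integral_eq_add_of_eqOn_Ioo (f := fun x => (v.eval x - uR x)^2)
    (g₁ := fun x => (v.eval x - ql.eval x)^2) (g₂ := fun x => (v.eval x - qr.eval x)^2)
    (a := xi - h/2) (b := xi) (c := xi + h/2) (by linarith) (by linarith)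
    (fun x hx => by simp only [hL x hx]) (fun x hx => by simp only [hR x hx])
    (((v.continuous.sub ql.continuous).pow 2).intervalIntegrable _ _)
    (((v.continuous.sub qr.continuous).pow 2).intervalIntegrable _ _)
  have hleft := integral_sq_comp_add_mul (f := fun x => v.eval x - ql.eval x)
    (s := h^(p+1)) (g := fun ξ => w.eval ξ + fd p D ξ) xi (-1/2) 0 fun ξ => by
      have hj := hjump ξ
      simp only [eval_sub, eval_add, eval_smul, smul_eq_mul] at hj hvw ⊢
      linear_combination hvw ξ + hj / 2
  have hright := integral_sq_comp_add_mul (f := fun x => v.eval x - qr.eval x)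
    (s := h^(p+1)) (g := fun ξ => w.eval ξ - fd p D ξ) xi 0 (1/2) fun ξ => by
      have hj := hjump ξ
      simp only [eval_sub, eval_add, eval_smul, smul_eq_mul] at hj hvw ⊢
      linear_combination hvw ξ - hj / 2
  rw [show xi + h * (-1/2) = xi - h/2 by ring, mul_zero, add_zero] at hleft
  rw [show xi + h * (1/2) = xi + h/2 by ring, mul_zero, add_zero] at hright
  rw [hsplit, hleft, hright, Qerr]
  ring

/-- scaling identity on one cell: the minimal squared `L²` distance of a
two-piece polynomial `u^R` to the space of polynomials of degree ≤ p on
`(x_i - h/2, x_i + h/2)` equals `h^{2p+3} Q(D⁰,…,Dᵖ)`. -/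
theorem cell_min_eq_scaled_Qform (p : ℕ) (h xi : ℝ) (hh : 0 < h)
    (uR : ℝ → ℝ) (ql qr : Polynomial ℝ)
    (hql : ql.natDegree ≤ p) (hqr : qr.natDegree ≤ p)
    (hL : ∀ x ∈ Set.Ioo (xi - h/2) xi, uR x = ql.eval x)
    (hR : ∀ x ∈ Set.Ioo xi (xi + h/2), uR x = qr.eval x) :
    sInf {q : ℝ | ∃ v : Polynomial ℝ, v.natDegree ≤ p ∧
        q = ∫ x in (xi - h/2)..(xi + h/2), (v.eval x - uR x)^2} =
      h^(2*p+3) * Qform p (fun k =>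
        ((Polynomial.derivative^[(k:ℕ)] qr).eval xi -
         (Polynomial.derivative^[(k:ℕ)] ql).eval xi) / h^(p+1-(k:ℕ))) := by
  have hmid : ((1/2 : ℝ) • (ql + qr)).natDegree ≤ p :=
    (natDegree_smul_le _ _).trans ((natDegree_add_le _ _).trans (max_le hql hqr))
  have hset : {q : ℝ | ∃ v : ℝ[X], v.natDegree ≤ p ∧
        q = ∫ x in (xi - h/2)..(xi + h/2), (v.eval x - uR x)^2} =
      h^(2*p+3) • {q : ℝ | ∃ w : ℝ[X], w.natDegree ≤ p ∧
        q = Qerr p (scaledJump p h xi ql qr) w} := by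
    ext q
    simp only [mem_smul_set, mem_ofPred_eq, smul_eq_mul]
    constructor
    · rintro ⟨v, hv, rfl⟩
      obtain ⟨w, hw, hvw⟩ := exists_natDegree_le_rescaled_remainder xi
        (pow_ne_zero (p+1) hh.ne') hmid hv
      exact ⟨_, ⟨w, hw, rfl⟩, (integral_sq_sub_eq_pow_mul_Qerr hh hql hqr hL hR hvw).symm⟩
    · rintro ⟨_, ⟨w, hw, rfl⟩, rfl⟩
      obtain ⟨v, hv, hvw⟩ := exists_natDegree_le_of_rescaled_remainder xi hh.ne' hmid hw
      exact ⟨v, hv, (integral_sq_sub_eq_pow_mul_Qerr hh hql hqr hL hR hvw).symm⟩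
  rw [hset, Real.sInf_smul_of_nonneg (by positivity), smul_eq_mul]
  rfl
end
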